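/- arXiv:1005.1531 — 3 statements merged into one kernel-verified Lean document; each statement's English description precedes it below -/
import Mathlib

section
/- Let ℓ, m be positive integers. Then the gcd of all elements of G_m(ℓ) equals ((ℓ, m)). In particular ((ℓ, m)) is the least element of G_m(ℓ). -/
/-- `((ℓ, m)) = ∏_{p prime, p ∣ ℓ} p ^ ν_p(m)`. -/
def dblParen (ℓ m : ℕ) : ℕ := ∏ p ∈ ℓ.primeFactors, p ^ (m.factorization p)

/-!
Compare `q`-adic valuations prime by prime. The condition `gcd (g ℓ) m = g` says
`min (ν_q g + ν_q ℓ) (ν_q m) = ν_q g` for every prime `q`. When `q ∣ ℓ` this forces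
`ν_q g = ν_q m`, and when `q ∤ ℓ` it only says `ν_q g ≤ ν_q m`. So the elements of `G_m(ℓ)`
are the divisors of `m` carrying the full `q`-part of `m` for each `q ∣ ℓ`; the least of them,
which divides all the others, is `((ℓ, m))`, with valuation `ν_q m` at `q ∣ ℓ` and `0` elsewhere.
-/

lemma dblParen_pos (ℓ m : ℕ) : 0 < dblParen ℓ m :=
  Finset.prod_pos fun _ hp => pow_pos (Nat.prime_of_mem_primeFactors hp).pos _

lemma factorization_dblParen (ℓ m q : ℕ) :
    (dblParen ℓ m).factorization q = if q ∈ ℓ.primeFactors then m.factorization q else 0 := by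
  rw [dblParen, Nat.factorization_prod
    fun p hp => pow_ne_zero _ (Nat.prime_of_mem_primeFactors hp).ne_zero,
    Finsupp.finsetSum_apply,
    Finset.sum_congr rfl fun p hp => by
      rw [(Nat.prime_of_mem_primeFactors hp).factorization_pow, Finsupp.single_apply]]
  simp

lemma factorization_gcd_mul (a b m q : ℕ) (ha : a ≠ 0) (hb : b ≠ 0) (hm : m ≠ 0) :
    (Nat.gcd (a * b) m).factorization q =
      min (a.factorization q + b.factorization q) (m.factorization q) := by
  rw [Nat.factorization_gcd (mul_ne_zero ha hb) hm, Finsupp.inf_apply,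
    Nat.factorization_mul ha hb, Finsupp.add_apply]

section

variable {ℓ m g : ℕ} (hℓ : ℓ ≠ 0) (hm : m ≠ 0)
include hℓ hm

lemma factorization_eq_of_gcd_mul_eq (h : Nat.gcd (g * ℓ) m = g) {q : ℕ}
    (hq : q ∈ ℓ.primeFactors) : g.factorization q = m.factorization q := by
  have hg : g ≠ 0 := by rintro rfl; simp [hm] at h
  have hℓq : 1 ≤ ℓ.factorization q :=
    (Nat.prime_of_mem_primeFactors hq).factorization_pos_of_dvd hℓ (Nat.dvd_of_mem_primeFactors hq)
  have := congrArg (·.factorization q) h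
  simp only [factorization_gcd_mul g ℓ m q hg hℓ hm] at this
  omega

lemma dblParen_dvd_of_gcd_mul_eq (h : Nat.gcd (g * ℓ) m = g) : dblParen ℓ m ∣ g := by
  have hg : g ≠ 0 := by rintro rfl; simp [hm] at h
  rw [← Nat.factorization_le_iff_dvd (dblParen_pos ℓ m).ne' hg]
  intro q
  rw [factorization_dblParen]
  split_ifs with hq
  · exact (factorization_eq_of_gcd_mul_eq hℓ hm h hq).ge
  · exact Nat.zero_le _

lemma gcd_dblParen_mul_eq : Nat.gcd (dblParen ℓ m * ℓ) m = dblParen ℓ m := by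
  have hD := (dblParen_pos ℓ m).ne'
  refine Nat.eq_of_factorization_eq (Nat.gcd_ne_zero_right hm) hD fun q => ?_
  rw [factorization_gcd_mul _ _ _ q hD hℓ hm, factorization_dblParen]
  split_ifs with hq
  · omega
  · have : ℓ.factorization q = 0 :=
      Finsupp.notMem_support_iff.mp (by rwa [Nat.support_factorization])
    omega

end

theorem gcd_of_G_eq_dblParen (ℓ m : ℕ) (hℓ : 0 < ℓ) (hm : 0 < m) :
    (∀ g ∈ {g : ℕ | 1 ≤ g ∧ Nat.gcd (g * ℓ) m = g}, dblParen ℓ m ∣ g) ∧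
    (∀ d : ℕ, (∀ g ∈ {g : ℕ | 1 ≤ g ∧ Nat.gcd (g * ℓ) m = g}, d ∣ g) → d ∣ dblParen ℓ m) ∧
    IsLeast {g : ℕ | 1 ≤ g ∧ Nat.gcd (g * ℓ) m = g} (dblParen ℓ m) := by
  have hdvd : ∀ g ∈ {g : ℕ | 1 ≤ g ∧ Nat.gcd (g * ℓ) m = g}, dblParen ℓ m ∣ g :=
    fun g hg => dblParen_dvd_of_gcd_mul_eq hℓ.ne' hm.ne' hg.2
  have hmem : dblParen ℓ m ∈ {g : ℕ | 1 ≤ g ∧ Nat.gcd (g * ℓ) m = g} :=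
    ⟨dblParen_pos ℓ m, gcd_dblParen_mul_eq hℓ.ne' hm.ne'⟩
  exact ⟨hdvd, fun d hd => hd _ hmem, hmem, fun g hg => Nat.le_of_dvd hg.1 (hdvd g hg)⟩
end

section
/- Let a, ℓ, m be positive integers with ((ℓ, m)) ≤ a (so that G_m(ℓ, a) is nonempty). Then the gcd of all elements of G_m(ℓ, a) equals ((ℓ, m)). -/
/-- `G_m(ℓ, a) = { g ∈ ℕ, g ≥ 1 : g ≤ a and gcd(g·ℓ, m) = g }`. -/
def Gset (m ℓ a : ℕ) : Finset ℕ :=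
  (Finset.Icc 1 a).filter (fun g => Nat.gcd (g * ℓ) m = g)

/-!
Compare `p`-adic valuations. Writing `g_p, ℓ_p, m_p` for them, `gcd(gℓ, m) = g` says
`min (g_p + ℓ_p) m_p = g_p` for every prime `p`. When `p ∣ ℓ` we have `ℓ_p ≥ 1`, so this
forces `g_p = m_p`; when `p ∤ ℓ` it only says `g_p ≤ m_p`. Hence every element of
`G_m(ℓ, a)` is a multiple of `((ℓ, m))`, whose valuations are `m_p` for `p ∣ ℓ` and `0`
otherwise, and `((ℓ, m))` itself lies in `G_m(ℓ, a)`.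
-/

namespace Nat

lemma dblParen_pos (ℓ m : ℕ) : 0 < dblParen ℓ m :=
  Finset.prod_pos fun _ hp => pow_pos (prime_of_mem_primeFactors hp).pos _

lemma factorization_dblParen (ℓ m p : ℕ) :
    (dblParen ℓ m).factorization p = if p ∈ ℓ.primeFactors then m.factorization p else 0 := by
  rw [dblParen,
    factorization_prod fun q hq => (pow_pos (prime_of_mem_primeFactors hq).pos _).ne',
    Finsupp.finsetSum_apply, ← Finset.sum_ite_eq' ℓ.primeFactors p m.factorization]
  refine Finset.sum_congr rfl fun q hq => ?_
  rw [(prime_of_mem_primeFactors hq).factorization_pow, Finsupp.single_apply]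

lemma factorization_gcd_mul {g ℓ m : ℕ} (hg : g ≠ 0) (hℓ : ℓ ≠ 0) (hm : m ≠ 0) (p : ℕ) :
    (gcd (g * ℓ) m).factorization p =
      min (g.factorization p + ℓ.factorization p) (m.factorization p) := by
  rw [factorization_gcd (mul_ne_zero hg hℓ) hm, Finsupp.inf_apply, factorization_mul hg hℓ,
    Finsupp.add_apply]

lemma gcd_dblParen_mul_eq {ℓ m : ℕ} (hℓ : ℓ ≠ 0) (hm : m ≠ 0) :
    gcd (dblParen ℓ m * ℓ) m = dblParen ℓ m := by
  have hD := (dblParen_pos ℓ m).ne'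
  refine eq_of_factorization_eq (gcd_ne_zero_right hm) hD fun p => ?_
  rw [factorization_gcd_mul hD hℓ hm, factorization_dblParen]
  by_cases hp : p ∈ ℓ.primeFactors
  · simp [hp]
  · simp [hp, Finsupp.notMem_support_iff.mp (support_factorization ℓ ▸ hp)]

lemma dblParen_dvd_of_gcd_mul_eq {g ℓ m : ℕ} (hℓ : ℓ ≠ 0) (hm : m ≠ 0)
    (hg : gcd (g * ℓ) m = g) : dblParen ℓ m ∣ g := by
  have hg0 : g ≠ 0 := fun h => hm (by simpa [h] using hg)
  rw [← factorization_le_iff_dvd (dblParen_pos ℓ m).ne' hg0]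
  intro p
  have hmin := factorization_gcd_mul hg0 hℓ hm p
  rw [hg] at hmin
  rw [factorization_dblParen]
  split_ifs with hp
  · have hℓp : 1 ≤ ℓ.factorization p :=
      (prime_of_mem_primeFactors hp).factorization_pos_of_dvd hℓ (dvd_of_mem_primeFactors hp)
    omega
  · exact zero_le _

end Nat

theorem gcd_of_Gset_eq_dblParen_general (a ℓ m : ℕ) (hℓ : 0 < ℓ) (hm : 0 < m)
    (hle : dblParen ℓ m ≤ a) :
    (Gset m ℓ a).gcd id = dblParen ℓ m := by
  have hmem : dblParen ℓ m ∈ Gset m ℓ a :=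
    Finset.mem_filter.mpr ⟨Finset.mem_Icc.mpr ⟨Nat.dblParen_pos ℓ m, hle⟩,
      Nat.gcd_dblParen_mul_eq hℓ.ne' hm.ne'⟩
  refine Nat.dvd_antisymm (Finset.gcd_dvd hmem) (Finset.dvd_gcd fun g hg => ?_)
  exact Nat.dblParen_dvd_of_gcd_mul_eq hℓ.ne' hm.ne' (Finset.mem_filter.mp hg).2

theorem gcd_of_Gset_eq_dblParen (a ℓ m : ℕ) (ha : 0 < a) (hℓ : 0 < ℓ) (hm : 0 < m)
    (hle : dblParen ℓ m ≤ a) :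
    (Gset m ℓ a).gcd id = dblParen ℓ m :=
  gcd_of_Gset_eq_dblParen_general a ℓ m hℓ hm hle
end

section
/- Let ℓ, m, g, p be positive integers with gcd(g·ℓ, m) = g. Let σ be a permutation of a set of size g·p·ℓ consisting of exactly g·p disjoint cycles each of length ℓ. Then the number of permutations τ consisting of p disjoint cycles each of length g·ℓ such that τ^m = σ equals (g·p)! · ℓ^{p(g−1)} / (g^p · p!). -/
/-!
Write `C(π)` for the centralizer of `π` in `Sym(α)`. If every cycle of `τ` has length `gℓ` and
`gcd(gℓ, m) = g`, then every cycle of `τ^m` has length `ℓ`; so `σ` has such an `m`-th root `τ₀`,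
and since permutations all of whose cycles have a common length are conjugate exactly when that
length agrees, the roots of the required type are the conjugates of `τ₀` with `m`-th power `σ`.
These form one orbit of `C(σ)` acting by conjugation, with stabiliser `C(τ₀) ≤ C(σ)`, so their
number is `|C(σ)| / |C(τ₀)| = ℓ^(gp) (gp)! / ((gℓ)^p p!)`.
-/

open Function Finset MulAction
open scoped Nat

namespace Equiv.Perm

variable {α : Type*}

theorem ncard_setOf_sameCycle [Finite α] (f : Perm α) (x : α) :
    {y | f.SameCycle x y}.ncard = minimalPeriod f x := by
  classical
  have : Fintype α := Fintype.ofFinite α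
  have horbit : {y | f.SameCycle x y} = orbit (Subgroup.zpowers f) x := by
    ext y
    constructor
    · rintro ⟨i, rfl⟩
      exact ⟨⟨f ^ i, i, rfl⟩, rfl⟩
    · rintro ⟨⟨_, i, rfl⟩, rfl⟩
      exact ⟨i, rfl⟩
  rw [horbit, ← Nat.card_coe_set_eq, Nat.card_eq_fintype_card]
  exact (minimalPeriod_eq_card f x).symm

theorem minimalPeriod_pow_eq_div_gcd [Finite α] (f : Perm α) (n : ℕ) (x : α) :
    minimalPeriod ⇑(f ^ n) x = minimalPeriod f x / (minimalPeriod f x).gcd n := by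
  rw [coe_pow]
  exact minimalPeriod_iterate_eq_div_gcd' (f.injective.mem_periodicPts x)

section Partition

variable [Fintype α] [DecidableEq α]

theorem card_support_cycleOf_eq_minimalPeriod {f : Perm α} {x : α} (hx : x ∈ f.support) :
    #(f.cycleOf x).support = minimalPeriod f x := by
  rw [← ncard_setOf_sameCycle, ← Set.ncard_coe_finset]
  congr 1
  ext y
  rw [Finset.mem_coe, mem_support_cycleOf_iff, Set.mem_ofPred_eq, and_iff_left hx]

theorem mem_cycleType_iff_exists_minimalPeriod {f : Perm α} {n : ℕ} :
    n ∈ f.cycleType ↔ ∃ x ∈ f.support, minimalPeriod f x = n := by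
  simp only [cycleType_def, Multiset.mem_map, Finset.mem_val, Function.comp_apply]
  constructor
  · rintro ⟨c, hc, rfl⟩
    obtain ⟨x, hx⟩ := (mem_cycleFactorsFinset_iff.1 hc).1.nonempty_support
    have hxf : x ∈ f.support := mem_cycleFactorsFinset_support_le hc hx
    exact ⟨x, hxf, by rw [← card_support_cycleOf_eq_minimalPeriod hxf, ← cycle_is_cycleOf hx hc]⟩
  · rintro ⟨x, hx, rfl⟩
    exact ⟨f.cycleOf x, cycleOf_mem_cycleFactorsFinset_iff.2 hx,
      card_support_cycleOf_eq_minimalPeriod hx⟩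

theorem mem_partition_parts_iff {f : Perm α} {n : ℕ} :
    n ∈ f.partition.parts ↔ ∃ x, minimalPeriod f x = n := by
  rw [parts_partition, Multiset.mem_add, mem_cycleType_iff_exists_minimalPeriod,
    Multiset.mem_replicate, Nat.sub_ne_zero_iff_lt]
  constructor
  · rintro (⟨x, -, hx⟩ | ⟨hcard, rfl⟩)
    · exact ⟨x, hx⟩
    · obtain ⟨x, -, hx⟩ := Finset.exists_mem_notMem_of_card_lt_card hcard
      exact ⟨x, minimalPeriod_eq_one_iff_isFixedPt.2 (notMem_support.1 hx)⟩
  · rintro ⟨x, rfl⟩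
    by_cases hx : x ∈ f.support
    · exact Or.inl ⟨x, hx, rfl⟩
    · exact Or.inr ⟨Finset.card_lt_univ_of_notMem hx,
        minimalPeriod_eq_one_iff_isFixedPt.2 (notMem_support.1 hx)⟩

theorem partition_parts_eq_replicate_iff {f : Perm α} {c : ℕ} (hc : 0 < c) :
    f.partition.parts = Multiset.replicate (Fintype.card α / c) c ↔
      ∀ x, minimalPeriod f x = c := by
  constructor
  · intro h x
    exact Multiset.eq_of_mem_replicate (h ▸ mem_partition_parts_iff.2 ⟨x, rfl⟩)
  · intro h
    have hrep : f.partition.parts = Multiset.replicate (Multiset.card f.partition.parts) c :=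
      Multiset.eq_replicate_card.2 fun n hn => by
        obtain ⟨x, rfl⟩ := mem_partition_parts_iff.1 hn
        exact h x
    have hsum := f.partition.parts_sum
    rw [hrep, Multiset.sum_replicate, smul_eq_mul] at hsum
    rw [hrep, ← Nat.div_eq_of_eq_mul_left hc hsum.symm]

end Partition

variable [Fintype α]

theorem isConj_iff_of_minimalPeriod_eq {f g : Perm α} {c : ℕ} (hc : 0 < c)
    (hf : ∀ x, minimalPeriod f x = c) : IsConj f g ↔ ∀ x, minimalPeriod g x = c := by
  classical
  rw [partition_eq_of_isConj, Nat.Partition.ext_iff, (partition_parts_eq_replicate_iff hc).2 hf,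
    eq_comm, partition_parts_eq_replicate_iff hc]

theorem exists_minimalPeriod_eq {c : ℕ} (hc : 0 < c) (hdvd : c ∣ Fintype.card α) :
    ∃ f : Perm α, ∀ x, minimalPeriod f x = c := by
  classical
  obtain rfl | hc2 : c = 1 ∨ 2 ≤ c := by omega
  · exact ⟨1, fun x => minimalPeriod_eq_one_iff_isFixedPt.2 rfl⟩
  obtain ⟨f, hf⟩ := (exists_with_cycleType_iff α (m := Multiset.replicate (Fintype.card α / c) c)).2
    ⟨by simp [Nat.div_mul_cancel hdvd], fun a ha => Multiset.eq_of_mem_replicate ha ▸ hc2⟩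
  refine ⟨f, (partition_parts_eq_replicate_iff hc).1 ?_⟩
  rw [parts_partition, ← sum_cycleType, hf, Multiset.sum_replicate, smul_eq_mul,
    Nat.div_mul_cancel hdvd, Nat.sub_self, Multiset.replicate_zero, add_zero]

theorem nat_card_centralizer_of_minimalPeriod_eq {f : Perm α} {c : ℕ} (hc : 0 < c)
    (h : ∀ x, minimalPeriod f x = c) :
    Nat.card (Subgroup.centralizer {f}) = c ^ (Fintype.card α / c) * (Fintype.card α / c)! := by
  classical
  have hparts := (partition_parts_eq_replicate_iff hc).2 h
  have hsum : Fintype.card α / c * c = Fintype.card α := by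
    simpa [hparts] using f.partition.parts_sum
  rw [nat_card_centralizer, ← filter_parts_partition_eq_cycleType, hparts]
  obtain rfl | hc2 : c = 1 ∨ 2 ≤ c := by omega
  · rw [Multiset.filter_eq_nil.2 fun a ha => by rw [Multiset.eq_of_mem_replicate ha]; decide]
    simp
  rw [Multiset.filter_eq_self.2 fun a ha => Multiset.eq_of_mem_replicate ha ▸ hc2,
    Multiset.sum_replicate, smul_eq_mul, hsum, Nat.sub_self, Nat.factorial_zero, one_mul,
    Multiset.prod_replicate, Multiset.toFinset_replicate]
  split_ifs with hk
  · simp [hk]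
  · rw [Finset.prod_singleton, Multiset.count_replicate_self]

theorem exists_pow_eq_of_minimalPeriod_eq_div_gcd {σ : Perm α} {c m : ℕ} (hc : 0 < c)
    (hdvd : c ∣ Fintype.card α) (hσ : ∀ x, minimalPeriod σ x = c / c.gcd m) :
    ∃ τ : Perm α, (∀ x, minimalPeriod τ x = c) ∧ τ ^ m = σ := by
  obtain ⟨τ, hτ⟩ := exists_minimalPeriod_eq hc hdvd
  have hτm : ∀ x, minimalPeriod ⇑(τ ^ m) x = c / c.gcd m := fun x => by
    rw [minimalPeriod_pow_eq_div_gcd, hτ]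
  have hpos : 0 < c / c.gcd m := Nat.div_pos (Nat.gcd_le_left m hc) (Nat.gcd_pos_of_pos_left m hc)
  obtain ⟨ρ, hρ⟩ := isConj_iff.1 ((isConj_iff_of_minimalPeriod_eq hpos hτm).2 hσ)
  refine ⟨ρ * τ * ρ⁻¹, (isConj_iff_of_minimalPeriod_eq hc hτ).1 (isConj_iff.2 ⟨ρ, rfl⟩), ?_⟩
  rw [conj_pow, hρ]

end Equiv.Perm

theorem nat_card_isConj_pow_eq_mul_nat_card_centralizer {G : Type*} [Group G] (τ₀ : G) (m : ℕ) :
    Nat.card {τ : G // IsConj τ₀ τ ∧ τ ^ m = τ₀ ^ m} * Nat.card (Subgroup.centralizer {τ₀}) =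
      Nat.card (Subgroup.centralizer {τ₀ ^ m}) := by
  set H := stabilizer (ConjAct G) (τ₀ ^ m)
  have hle : stabilizer (ConjAct G) τ₀ ≤ H := fun k hk => by
    rw [mem_stabilizer_iff, smul_pow', hk]
  have horbit : ∀ τ, IsConj τ₀ τ ∧ τ ^ m = τ₀ ^ m ↔ τ ∈ orbit H τ₀ := by
    intro τ
    constructor
    · rintro ⟨hconj, hpow⟩
      obtain ⟨k, rfl⟩ := ConjAct.mem_orbit_conjAct.2 hconj.symm
      exact ⟨⟨k, by rw [mem_stabilizer_iff, smul_pow']; exact hpow⟩, rfl⟩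
    · rintro ⟨k, rfl⟩
      refine ⟨(ConjAct.mem_orbit_conjAct.1 (mem_orbit τ₀ (k : ConjAct G))).symm, ?_⟩
      change ((k : ConjAct G) • τ₀) ^ m = τ₀ ^ m
      rw [← smul_pow', mem_stabilizer_iff.1 k.2]
  have hstab : stabilizer H τ₀ = (stabilizer (ConjAct G) τ₀).subgroupOf H := rfl
  calc Nat.card {τ : G // IsConj τ₀ τ ∧ τ ^ m = τ₀ ^ m} * Nat.card (Subgroup.centralizer {τ₀})
      = Nat.card (orbit H τ₀) * Nat.card (stabilizer H τ₀) := by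
        rw [Nat.card_congr (Equiv.subtypeEquivRight horbit), hstab,
          Nat.card_congr (Subgroup.subgroupOfEquivOfLe hle).toEquiv,
          Subgroup.nat_card_centralizer_nat_card_stabilizer]
    _ = Nat.card H := by
        rw [← Nat.card_prod, Nat.card_congr (orbitProdStabilizerEquivGroup H τ₀)]
    _ = Nat.card (Subgroup.centralizer {τ₀ ^ m}) :=
        (Subgroup.nat_card_centralizer_nat_card_stabilizer _).symm

theorem card_roots_type_gl_pow_p_general {α : Type*} [Fintype α]
    (ℓ m g p : ℕ) (hℓ : 0 < ℓ) (hg : 0 < g)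
    (hgcd : Nat.gcd (g * ℓ) m = g)
    (hcard : Fintype.card α = g * p * ℓ)
    (σ : Equiv.Perm α)
    (hσ : ∀ x : α, Set.ncard {y : α | σ.SameCycle x y} = ℓ) :
    Nat.card {τ : Equiv.Perm α //
        (∀ x : α, Set.ncard {y : α | τ.SameCycle x y} = g * ℓ) ∧ τ ^ m = σ} *
      (g ^ p * Nat.factorial p) = Nat.factorial (g * p) * ℓ ^ (p * (g - 1)) := by
  simp only [Equiv.Perm.ncard_setOf_sameCycle] at hσ ⊢
  have hgℓ : 0 < g * ℓ := Nat.mul_pos hg hℓ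
  have hσ' : ∀ x, minimalPeriod σ x = g * ℓ / (g * ℓ).gcd m := by
    rwa [hgcd, Nat.mul_div_cancel_left ℓ hg]
  obtain ⟨τ₀, hτ₀, rfl⟩ :=
    Equiv.Perm.exists_pow_eq_of_minimalPeriod_eq_div_gcd hgℓ ⟨p, by rw [hcard]; ring⟩ hσ'
  have hcard₁ : Fintype.card α / (g * ℓ) = p := by
    rw [hcard, mul_right_comm, Nat.mul_div_cancel_left p hgℓ]
  have hcard₂ : Fintype.card α / ℓ = g * p := by rw [hcard, Nat.mul_div_cancel _ hℓ]
  set N := Nat.card {τ : Equiv.Perm α // (∀ x, minimalPeriod τ x = g * ℓ) ∧ τ ^ m = τ₀ ^ m}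
  have hroots : N * ((g * ℓ) ^ p * p !) = ℓ ^ (g * p) * (g * p)! := by
    have h := nat_card_isConj_pow_eq_mul_nat_card_centralizer τ₀ m
    rwa [Nat.card_congr (Equiv.subtypeEquivRight fun τ =>
        and_congr_left' (Equiv.Perm.isConj_iff_of_minimalPeriod_eq hgℓ hτ₀)),
      Equiv.Perm.nat_card_centralizer_of_minimalPeriod_eq hgℓ hτ₀,
      Equiv.Perm.nat_card_centralizer_of_minimalPeriod_eq hℓ hσ, hcard₁, hcard₂] at h
  have hpow : ℓ ^ (g * p) = ℓ ^ (p * (g - 1)) * ℓ ^ p := by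
    rw [← pow_add, ← Nat.mul_add_one, Nat.sub_add_cancel hg, mul_comm]
  apply Nat.eq_of_mul_eq_mul_right (pow_pos hℓ p)
  calc N * (g ^ p * p !) * ℓ ^ p = N * ((g * ℓ) ^ p * p !) := by ring
    _ = ℓ ^ (g * p) * (g * p)! := hroots
    _ = (g * p)! * ℓ ^ (p * (g - 1)) * ℓ ^ p := by rw [hpow]; ring

theorem card_roots_type_gl_pow_p {α : Type*} [Fintype α] [DecidableEq α]
    (ℓ m g p : ℕ) (hℓ : 0 < ℓ) (hm : 0 < m) (hg : 0 < g) (hp : 0 < p)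
    (hgcd : Nat.gcd (g * ℓ) m = g)
    (hcard : Fintype.card α = g * p * ℓ)
    (σ : Equiv.Perm α)
    (hσ : ∀ x : α, Set.ncard {y : α | σ.SameCycle x y} = ℓ) :
    Nat.card {τ : Equiv.Perm α //
        (∀ x : α, Set.ncard {y : α | τ.SameCycle x y} = g * ℓ) ∧ τ ^ m = σ} *
      (g ^ p * Nat.factorial p) = Nat.factorial (g * p) * ℓ ^ (p * (g - 1)) :=
  card_roots_type_gl_pow_p_general ℓ m g p hℓ hg hgcd hcard σ hσ
end
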